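/- arXiv:2003.13207 — 6 statements merged into one kernel-verified Lean document; each statement's English description precedes it below -/
import Mathlib

section
/- The Hardy hierarchy satisfies: for all ordinals α, β < ε₀ and all natural numbers x, if α + β equals the natural (Hessenberg) sum of α and β (i.e. the sum is 'defined' as α ∔ β), then H_{α ∔ β}(x) = H_α(H_β(x)). -/
open ONote in
/-- `α` is a successor ordinal notation (its Cantor normal form ends with `ω^0·m`). -/
def ONote.isSucc : ONote → Prop
  | ONote.zero => False
  | ONote.oadd e _ ONote.zero => e = 0
  | ONote.oadd _ _ (ONote.oadd e n a) => ONote.isSucc (ONote.oadd e n a)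

instance : DecidablePred ONote.isSucc := by
  intro a
  induction a with
  | zero => exact .isFalse (by simp [ONote.isSucc])
  | oadd e n a ihe iha =>
    cases a with
    | zero => exact decidable_of_iff (e = 0) Iff.rfl
    | oadd e' n' a' => exact iha

/-- The standard fundamental sequence assignment `α[x]` on Cantor normal forms:
`0[x] = 0`, `(α+1)[x] = α`, and for `λ` with last term `ω^(β+1)` one has
`λ[x] = (λ - ω^(β+1)) + ω^β·x`, while for last term `ω^γ` (`γ` limit),
`λ[x] = (λ - ω^γ) + ω^(γ[x])`. -/
def ONote.fseq : ONote → ℕ → ONote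
  | ONote.zero, _ => ONote.zero
  | ONote.oadd e m (ONote.oadd e' m' a'), x =>
      ONote.oadd e m (ONote.fseq (ONote.oadd e' m' a') x)
  | ONote.oadd ONote.zero m ONote.zero, _ =>
      if _h : m = 1 then ONote.zero else ONote.oadd ONote.zero (m - 1) ONote.zero
  | ONote.oadd (ONote.oadd e1 m1 a1) m ONote.zero, x =>
      let e := ONote.oadd e1 m1 a1
      let tail : ONote → ONote :=
        fun t => if m = 1 then t else ONote.oadd e (m - 1) t
      if ONote.isSucc e then
        match x with
        | 0 => tail ONote.zero
        | Nat.succ y => tail (ONote.oadd (ONote.fseq e (y+1)) (Nat.succPNat y) ONote.zero)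
      else tail (ONote.oadd (ONote.fseq e x) 1 ONote.zero)

/-- `α <_n β` : transitive closure of `α = β[n]`. -/
def ONote.stepLt (n : ℕ) (a b : ONote) : Prop :=
  Relation.TransGen (fun x y => x = ONote.fseq y n) a b

/-- `α ≤_n β`. -/
def ONote.stepLe (n : ℕ) (a b : ONote) : Prop :=
  ONote.stepLt n a b ∨ a = b

/-- The graph of the Hardy hierarchy: `H_0(x) = x`, `H_{α+1}(x) = H_α(x+1)`,
`H_λ(x) = H_{λ[x]}(x)` for limit `λ`. -/
inductive HardyRel : ONote → ℕ → ℕ → Prop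
  | zero (x : ℕ) : HardyRel ONote.zero x x
  | succ {a : ONote} {x y : ℕ} (h : a.isSucc) (hrec : HardyRel (a.fseq x) (x + 1) y) :
      HardyRel a x y
  | limit {a : ONote} {x y : ℕ} (h0 : a ≠ ONote.zero) (h : ¬ a.isSucc)
      (hrec : HardyRel (a.fseq x) x y) : HardyRel a x y

universe u

/-- Natural (Hessenberg) addition of ordinals, as in the older Mathlib's
`Mathlib.SetTheory.Ordinal.NaturalOps` (removed from the current library). -/
noncomputable def Ordinal.nadd (a b : Ordinal.{u}) : Ordinal.{u} :=
  max (⨆ x : Set.Iio a, Order.succ (Ordinal.nadd x.1 b))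
    (⨆ x : Set.Iio b, Order.succ (Ordinal.nadd a x.1))
termination_by (a, b)
decreasing_by all_goals cases x; decreasing_tactic

infixl:65 " ♯ " => Ordinal.nadd

open scoped Classical in
/-- The Hardy function `H_α : ℕ → ℕ` (for `α` in normal form the defining
recursion terminates, so `hardy` is the unique value of the graph `HardyRel`). -/
noncomputable def hardy (a : ONote) (x : ℕ) : ℕ :=
  if h : ∃ y, HardyRel a x y then h.choose else 0

/-!
If `repr (a + b) = repr a ♯ repr b`, then the leading exponent of `b` is at most the last exponent
of `a`: otherwise the last term of `a` is absorbed by `b` and `a + b < a ♯ b`. The Cantor normal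
form of `a + b` is then that of `a` followed by that of `b` (the two middle terms possibly merged),
so for `b ≠ 0` the fundamental sequence only acts on the `b` part, `(a + b)[x] = a + b[x]`, and
`a + b` is a successor exactly when `b` is. Hence the computation of `H_{a+b}(x)` retraces that of
`H_b(x)` until `b` is reduced to `0` and then continues as the computation of `H_a(H_b(x))`.
-/

open ONote Ordinal

theorem PNat.add_one_ne_one (m : ℕ+) : m + 1 ≠ 1 := (PNat.lt_add_left 1 m).ne'

namespace Ordinal

theorem nadd_lt_nadd_right {a b : Ordinal} (h : a < b) (c : Ordinal) : a ♯ c < b ♯ c := by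
  rw [nadd.eq_1 b c]
  refine (Order.lt_succ (a ♯ c)).trans_le (le_max_of_le_left ?_)
  exact le_ciSup (f := fun y : Set.Iio b => Order.succ (y.1 ♯ c)) bddAbove_of_small ⟨a, h⟩

theorem nadd_lt_nadd_left {a b : Ordinal} (h : a < b) (c : Ordinal) : c ♯ a < c ♯ b := by
  rw [nadd.eq_1 c b]
  refine (Order.lt_succ (c ♯ a)).trans_le (le_max_of_le_right ?_)
  exact le_ciSup (f := fun y : Set.Iio b => Order.succ (c ♯ y.1)) bddAbove_of_small ⟨a, h⟩

theorem le_self_nadd (a b : Ordinal) : a ≤ a ♯ b := by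
  induction a using WellFoundedLT.induction with
  | _ a ih => exact le_of_forall_lt fun c hc => (ih c hc).trans_lt (nadd_lt_nadd_right hc b)

theorem add_le_nadd (a b : Ordinal) : a + b ≤ a ♯ b := by
  induction b using WellFoundedLT.induction with
  | _ b ih =>
    refine le_of_forall_lt fun d hd => ?_
    rcases lt_or_ge d a with hda | had
    · exact hda.trans_le (le_self_nadd a b)
    · rw [← Ordinal.add_sub_cancel_of_le had] at hd ⊢
      have hdb : d - a < b := (add_lt_add_iff_left a).1 hd
      exact (ih _ hdb).trans_lt (nadd_lt_nadd_left hdb a)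

end Ordinal

namespace ONote

theorem oadd_ne_zero (e : ONote) (n : ℕ+) (a : ONote) : oadd e n a ≠ 0 := (oadd_pos e n a).ne'

theorem NFBelow.nf {a : ONote} {c : Ordinal} (h : NFBelow a c) : NF a := ⟨⟨c, h⟩⟩

theorem add_ne_zero_of_ne_zero_right (a : ONote) {b : ONote} (hb : b ≠ 0) : a + b ≠ 0 := by
  cases a with
  | zero => rwa [zero_def, zero_add]
  | oadd e n t =>
    rw [oadd_add]
    unfold addAux
    split
    · exact oadd_ne_zero _ _ _
    · split <;> exact oadd_ne_zero _ _ _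

theorem add_zero_of_nf {a : ONote} (h : NF a) : a + 0 = a := by
  have := h
  rw [← repr_inj, repr_add, repr_zero, add_zero]

theorem repr_oadd (e : ONote) (n : ℕ+) (a : ONote) :
    repr (oadd e n a) = ω ^ repr e * (n : ℕ) + repr a := rfl

theorem oadd_add_of_nfBelow {e t b : ONote} {n : ℕ+} (h : NF (oadd e n t))
    (hb : NFBelow b (repr e)) : oadd e n t + b = oadd e n (t + b) := by
  have : NF t := h.snd
  have : NF b := hb.nf
  have : NF (oadd e n (t + b)) := NF.oadd h.fst n (add_nfBelow h.snd' hb)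
  rw [← repr_inj, repr_add, repr_oadd, repr_oadd, repr_add t b, add_assoc]

theorem oadd_zero_add_oadd {e s : ONote} (n : ℕ+) {N : ℕ+} (h : NF (oadd e N s)) :
    oadd e n 0 + oadd e N s = oadd e (n + N) s := by
  have : NF e := h.fst
  have : NF (oadd e (n + N) s) := NF.oadd h.fst _ h.snd'
  rw [← repr_inj, repr_add, repr_oadd, repr_oadd, repr_oadd, repr_zero, add_zero, ← add_assoc,
    ← mul_add, PNat.add_coe, Nat.cast_add]

theorem isSucc_oadd_of_ne_zero (e : ONote) (n : ℕ+) {t : ONote} (ht : t ≠ 0) :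
    isSucc (oadd e n t) ↔ isSucc t := by
  cases t with
  | zero => exact absurd rfl ht
  | oadd => exact Iff.rfl

theorem isSucc_oadd_congr (e : ONote) (m n : ℕ+) (t : ONote) :
    isSucc (oadd e m t) ↔ isSucc (oadd e n t) := by
  cases t <;> exact Iff.rfl

theorem ne_zero_of_isSucc {a : ONote} (h : isSucc a) : a ≠ 0 := by
  rintro rfl
  exact h

theorem fseq_oadd_of_ne_zero (e : ONote) (n : ℕ+) {t : ONote} (ht : t ≠ 0) (x : ℕ) :
    fseq (oadd e n t) x = oadd e n (fseq t x) := by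
  cases t with
  | zero => exact absurd rfl ht
  | oadd => rw [fseq]

theorem fseq_oadd_add_one_zero (e : ONote) (m : ℕ+) (x : ℕ) :
    fseq (oadd e (m + 1) 0) x = oadd e m (fseq (oadd e 1 0) x) := by
  cases e with
  | zero => simp [fseq, PNat.add_one_ne_one, PNat.add_sub]
  | oadd e₁ m₁ a₁ =>
    simp only [fseq]
    split_ifs <;> cases x <;> simp_all [PNat.add_one_ne_one, PNat.add_sub]

-- Proved together: `ω ^ e[x]` is in normal form only because `e[x] < e`.
theorem nf_fseq_and_repr_fseq_lt : ∀ {a : ONote}, NF a → ∀ x : ℕ,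
    NF (fseq a x) ∧ (a ≠ 0 → repr (fseq a x) < repr a)
  | zero, _, _ => ⟨NF.zero, fun h => absurd rfl h⟩
  | oadd e m zero, h, x => by
    simp only [zero_def] at h ⊢
    have he : NF e := h.fst
    have hu : NFBelow (fseq (oadd e 1 0) x) (repr e) := by
      cases e with
      | zero => exact NFBelow.zero
      | oadd e₁ m₁ a₁ =>
        have ih := nf_fseq_and_repr_fseq_lt he
        have hω : ∀ y k,
            NFBelow (oadd (fseq (oadd e₁ m₁ a₁) y) k 0) (repr (oadd e₁ m₁ a₁)) :=
          fun y k => NFBelow.oadd (ih y).1 NFBelow.zero ((ih y).2 (oadd_ne_zero _ _ _))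
        simp only [fseq]
        split_ifs <;> cases x <;> first | exact NFBelow.zero | exact hω _ _
    obtain rfl | ⟨k, rfl⟩ := (eq_or_ne m 1).imp_right PNat.exists_eq_succ_of_ne_one
    · refine ⟨hu.nf, fun _ => ?_⟩
      simpa [repr_oadd] using hu.repr_lt
    · rw [fseq_oadd_add_one_zero]
      refine ⟨NF.oadd he k hu, fun _ => ?_⟩
      calc repr (oadd e k (fseq (oadd e 1 0) x))
          = ω ^ repr e * (k : ℕ) + repr (fseq (oadd e 1 0) x) := rfl
        _ < ω ^ repr e * (k : ℕ) + ω ^ repr e := add_lt_add_right hu.repr_lt _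
        _ = repr (oadd e (k + 1) 0) := by simp [mul_add_one]
  | oadd e m (oadd e' m' t'), h, x => by
    obtain ⟨hnf, hlt⟩ := nf_fseq_and_repr_fseq_lt h.snd x
    have hlt := hlt (oadd_ne_zero _ _ _)
    rw [fseq_oadd_of_ne_zero _ _ (oadd_ne_zero _ _ _)]
    exact ⟨NF.oadd h.fst m (NF.below_of_lt' (hlt.trans h.snd'.repr_lt) hnf),
      fun _ => add_lt_add_right hlt _⟩

theorem NF.fseq {a : ONote} (h : NF a) (x : ℕ) : NF (fseq a x) :=
  (nf_fseq_and_repr_fseq_lt h x).1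

theorem repr_fseq_lt {a : ONote} (h : NF a) (ha : a ≠ 0) (x : ℕ) : repr (fseq a x) < repr a :=
  (nf_fseq_and_repr_fseq_lt h x).2 ha

theorem NFBelow.fseq {a : ONote} {c : Ordinal} (h : NFBelow a c) (x : ℕ) :
    NFBelow (fseq a x) c := by
  rcases eq_or_ne a 0 with rfl | ha
  · exact NFBelow.zero
  · exact NF.below_of_lt' ((repr_fseq_lt h.nf ha x).trans h.repr_lt) (h.nf.fseq x)

def lastExp : ONote → ONote
  | zero => 0
  | oadd e _ zero => e
  | oadd _ _ (oadd e n a) => lastExp (oadd e n a)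

theorem lastExp_oadd_of_ne_zero (e : ONote) (n : ℕ+) {t : ONote} (ht : t ≠ 0) :
    lastExp (oadd e n t) = lastExp t := by
  cases t with
  | zero => exact absurd rfl ht
  | oadd => rfl

theorem NFBelow.repr_lastExp_lt : ∀ {a : ONote} {c : Ordinal}, NFBelow a c → a ≠ 0 →
    repr (lastExp a) < c
  | ONote.zero, _, _, ha => absurd rfl ha
  | ONote.oadd _ _ ONote.zero, _, h, _ => h.lt
  | ONote.oadd _ _ (ONote.oadd _ _ _), _, h, _ =>
    (repr_lastExp_lt h.snd (oadd_ne_zero _ _ _)).trans h.lt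

theorem exists_repr_eq_add_omega0_opow_lastExp : ∀ {a : ONote}, a ≠ 0 →
    ∃ (c : Ordinal) (k : ℕ+), repr a = c + ω ^ repr (lastExp a) * (k : ℕ)
  | zero, ha => absurd rfl ha
  | oadd e n zero, _ => ⟨0, n, by simp [lastExp]⟩
  | oadd e n (oadd e' n' t'), _ => by
    obtain ⟨c, k, hc⟩ := exists_repr_eq_add_omega0_opow_lastExp (oadd_ne_zero e' n' t')
    refine ⟨ω ^ repr e * (n : ℕ) + c, k, ?_⟩
    rw [lastExp_oadd_of_ne_zero _ _ (oadd_ne_zero _ _ _), repr_oadd, hc, add_assoc]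

/-- The Cantor normal form of `a + b` is that of `a` followed by that of `b`, where the last term
of `a` may merge with the first term of `b`. -/
def Concatenable (a b : ONote) : Prop :=
  a = 0 ∨ NFBelow b (Order.succ (repr (lastExp a)))

theorem Concatenable.of_oadd {e t b : ONote} {n : ℕ+} (h : Concatenable (oadd e n t) b) :
    Concatenable t b := by
  rcases eq_or_ne t 0 with rfl | ht
  · exact Or.inl rfl
  · rw [Concatenable, lastExp_oadd_of_ne_zero _ _ ht] at h
    exact Or.inr (h.resolve_left (oadd_ne_zero _ _ _))

theorem Concatenable.fseq {a b : ONote} (h : Concatenable a b) (x : ℕ) :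
    Concatenable a (fseq b x) :=
  h.imp_right (NFBelow.fseq · x)

theorem Concatenable.nfBelow_or_eq_oadd {e t b : ONote} {n : ℕ+}
    (hC : Concatenable (oadd e n t) b) (h : NF (oadd e n t)) :
    NFBelow b (repr e) ∨ t = 0 ∧ ∃ N s, b = oadd e N s ∧ NF (oadd e N s) := by
  have hb := hC.resolve_left (oadd_ne_zero _ _ _)
  rcases eq_or_ne t 0 with rfl | ht
  · cases b with
    | zero => exact Or.inl NFBelow.zero
    | oadd E N s =>
      have hE : repr E ≤ repr e := Order.lt_succ_iff.1 hb.lt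
      rcases hE.lt_or_eq with hlt | heq
      · exact Or.inl (NFBelow.oadd hb.fst hb.snd hlt)
      · have : NF E := hb.fst
        have : NF e := h.fst
        obtain rfl := repr_inj.1 heq
        exact Or.inr ⟨rfl, N, s, rfl, hb.nf⟩
  · rw [lastExp_oadd_of_ne_zero _ _ ht] at hb
    exact Or.inl (hb.mono (Order.succ_le_of_lt (h.snd'.repr_lastExp_lt ht)))

theorem concatenable_of_repr_add_eq_nadd {a b : ONote} (ha : NF a) (hb : NF b)
    (h : repr (a + b) = repr a ♯ repr b) : Concatenable a b := by
  by_contra hC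
  obtain ⟨ha0, hbig⟩ := not_or.1 hC
  obtain ⟨c, k, hc⟩ := exists_repr_eq_add_omega0_opow_lastExp ha0
  have hb : ω ^ Order.succ (repr (lastExp a)) ≤ repr b :=
    not_lt.1 fun hlt => hbig (NF.below_of_lt' hlt hb)
  have habs : ω ^ repr (lastExp a) * (k : ℕ) + repr b = repr b :=
    add_of_omega0_opow_le (opow_mul_lt_opow (natCast_lt_omega0 k) (Order.lt_succ _)) hb
  have hca : c < repr a := hc ▸ lt_add_of_pos_right c
    (mul_pos (opow_pos _ omega0_pos) (by exact_mod_cast k.pos))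
  have hlt : repr a + repr b < repr a ♯ repr b := calc
    repr a + repr b = c + repr b := by rw [hc, add_assoc, habs]
    _ ≤ c ♯ repr b := add_le_nadd _ _
    _ < repr a ♯ repr b := nadd_lt_nadd_right hca _
  rw [← repr_add] at hlt
  exact hlt.ne h

theorem fseq_oadd_zero_add_oadd {e s : ONote} (n : ℕ+) {N : ℕ+} (h : NF (oadd e N s))
    (x : ℕ) :
    fseq (oadd e n 0 + oadd e N s) x = oadd e n 0 + fseq (oadd e N s) x := by
  have he : NF e := h.fst
  rw [oadd_zero_add_oadd n h]
  rcases eq_or_ne s 0 with rfl | hs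
  · have hlt : repr (fseq (oadd e 1 0) x) < ω ^ repr e := by
      simpa using repr_fseq_lt (NF.oadd_zero e 1) (oadd_ne_zero _ _ _) x
    have hu : NFBelow (fseq (oadd e 1 0) x) (repr e) :=
      NF.below_of_lt' hlt ((NF.oadd_zero e 1).fseq x)
    obtain rfl | ⟨k, rfl⟩ := (eq_or_ne N 1).imp_right PNat.exists_eq_succ_of_ne_one
    · rw [fseq_oadd_add_one_zero, oadd_add_of_nfBelow (NF.oadd_zero e n) hu, zero_add]
    · rw [← add_assoc, fseq_oadd_add_one_zero, fseq_oadd_add_one_zero,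
        oadd_zero_add_oadd n (NF.oadd he k hu)]
  · rw [fseq_oadd_of_ne_zero _ _ hs, fseq_oadd_of_ne_zero _ _ hs,
      oadd_zero_add_oadd n (NF.oadd he N (h.snd'.fseq x))]

theorem fseq_add : ∀ {a : ONote}, NF a → ∀ {b : ONote}, Concatenable a b → b ≠ 0 →
    ∀ x : ℕ,
    fseq (a + b) x = a + fseq b x
  | zero, _, b, _, _, x => by simp only [zero_def, zero_add]
  | oadd e n t, h, b, hC, hb0, x => by
    rcases hC.nfBelow_or_eq_oadd h with hbe | ⟨rfl, N, s, rfl, hN⟩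
    · rw [oadd_add_of_nfBelow h hbe,
        fseq_oadd_of_ne_zero _ _ (add_ne_zero_of_ne_zero_right t hb0),
        fseq_add h.snd hC.of_oadd hb0 x, oadd_add_of_nfBelow h (hbe.fseq x)]
    · exact fseq_oadd_zero_add_oadd n hN x

theorem isSucc_add : ∀ {a : ONote}, NF a → ∀ {b : ONote}, Concatenable a b → b ≠ 0 →
    (isSucc (a + b) ↔ isSucc b)
  | zero, _, b, _, _ => by simp only [zero_def, zero_add]
  | oadd e n t, h, b, hC, hb0 => by
    rcases hC.nfBelow_or_eq_oadd h with hbe | ⟨rfl, N, s, rfl, hN⟩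
    · rw [oadd_add_of_nfBelow h hbe,
        isSucc_oadd_of_ne_zero _ _ (add_ne_zero_of_ne_zero_right t hb0)]
      exact isSucc_add h.snd hC.of_oadd hb0
    · rw [oadd_zero_add_oadd n hN]
      exact isSucc_oadd_congr _ _ _ _

end ONote

theorem exists_hardyRel {a : ONote} (ha : a.NF) (x : ℕ) : ∃ y, HardyRel a x y := by
  by_cases h0 : a = 0
  · exact ⟨x, h0 ▸ .zero x⟩
  have hdec := repr_fseq_lt ha h0 x
  by_cases hs : a.isSucc
  · obtain ⟨y, hy⟩ := exists_hardyRel (ha.fseq x) (x + 1)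
    exact ⟨y, .succ hs hy⟩
  · obtain ⟨y, hy⟩ := exists_hardyRel (ha.fseq x) x
    exact ⟨y, .limit h0 hs hy⟩
termination_by a

namespace HardyRel

theorem unique {a : ONote} {x y z : ℕ} (hy : HardyRel a x y) (hz : HardyRel a x z) : y = z := by
  induction hy generalizing z with
  | zero => cases hz <;> first | rfl | contradiction
  | succ hs _ ih =>
    cases hz with
    | zero => exact hs.elim
    | succ _ hz => exact ih hz
    | limit _ hs' _ => exact absurd hs hs'
  | limit h0 hs _ ih =>
    cases hz with
    | zero => exact absurd rfl h0
    | succ hs' _ => exact absurd hs' hs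
    | limit _ _ hz => exact ih hz

theorem add {a b : ONote} {x z y : ℕ} (ha : a.NF) (hb : HardyRel b x z) (hab : a.Concatenable b)
    (hy : HardyRel a z y) : HardyRel (a + b) x y := by
  induction hb with
  | zero x => rwa [zero_def, add_zero_of_nf ha]
  | succ hs _ ih =>
    have hb0 := ne_zero_of_isSucc hs
    refine .succ ((isSucc_add ha hab hb0).2 hs) ?_
    rw [fseq_add ha hab hb0]
    exact ih (hab.fseq _) hy
  | limit hb0 hs _ ih =>
    refine .limit (add_ne_zero_of_ne_zero_right a hb0) (mt (isSucc_add ha hab hb0).1 hs) ?_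
    rw [fseq_add ha hab hb0]
    exact ih (hab.fseq _) hy

theorem hardy_eq {a : ONote} {x y : ℕ} (h : HardyRel a x y) : hardy a x = y := by
  have hex : ∃ y, HardyRel a x y := ⟨y, h⟩
  rw [hardy, dif_pos hex]
  exact hex.choose_spec.unique h

end HardyRel

/-- if `α + β` equals the natural (Hessenberg) sum `α ♯ β`
(so that `α ∔ β` is defined), then `H_{α ∔ β}(x) = H_α(H_β(x))`. -/
theorem hardy_add (a b : ONote) (ha : a.NF) (hb : b.NF)
    (hdot : ONote.repr (a + b) = ONote.repr a ♯ ONote.repr b) (x : ℕ) :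
    hardy (a + b) x = hardy a (hardy b x) := by
  obtain ⟨z, hz⟩ := exists_hardyRel hb x
  obtain ⟨y, hy⟩ := exists_hardyRel ha z
  have hab := concatenable_of_repr_add_eq_nadd ha hb hdot
  rw [hz.hardy_eq, hy.hardy_eq, (hz.add ha hab hy).hardy_eq]
end

section
/- The infinite Ramsey theorem implies the Diagonal Homogeneous principle DH: for all positive integers n, m, c there exists K > 1+n such that K →_Δ (m)^{1+n}_c, i.e., for every partition P : [K]^{1+n} → c of the (1+n)-element subsets of {0,...,K−1} into c colors, there is a set H ⊆ {0,...,K−1} with |H| = m that is diagonal homogeneous for P. -/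
/-- `H` is *diagonal homogeneous* for a partition `P` of `(1+n)`-element sets:
for `x₀ ∈ H`, `a < x₀`, and `n`-element subsets `Y, Z ⊆ H` lying entirely above
`x₀`, the colors of `{a} ∪ Y` and `{a} ∪ Z` agree. -/
def DiagHom (n : ℕ) {c : ℕ} (P : Finset ℕ → Fin c) (H : Finset ℕ) : Prop :=
  ∀ x₀ ∈ H, ∀ a < x₀, ∀ Y Z : Finset ℕ, Y ⊆ H → Z ⊆ H →
    Y.card = n → Z.card = n → (∀ y ∈ Y, x₀ < y) → (∀ z ∈ Z, x₀ < z) →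
    P (insert a Y) = P (insert a Z)

/-- `K →_Δ (m)^{1+n}_c` : every `c`-coloring of the `(1+n)`-element subsets of
`{0,…,K−1}` admits a diagonal homogeneous set of size `m`. -/
def ArrowDiag (K m n c : ℕ) : Prop :=
  ∀ P : Finset ℕ → Fin c, ∃ H : Finset ℕ,
    H ⊆ Finset.range K ∧ H.card = m ∧ DiagHom n P H

/-! For a fixed `x₀`, colouring an `n`-set `Y` above `x₀` by the tuple `(P ({a} ∪ Y))_{a < x₀}`
uses only finitely many colours, so the infinite Ramsey theorem shrinks the rest of the set to
an infinite set on which this tuple is constant. Repeating this `m` times yields a diagonal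
homogeneous set of any size `m` for every colouring of the finite subsets of `ℕ`. The finite
version follows by compactness: if every `K` had a bad colouring `Q K`, a subsequence of the
`Q K` converges pointwise (Tychonoff) to a colouring `P`, and a diagonal homogeneous set for
`P` is one for `Q K` as soon as `Q K` agrees with `P` on the subsets of a large enough range. -/

open Filter Finset

lemma exists_strictMono_of_forall_infinite (Q : ℕ → Set ℕ → Prop)
    (hQ : ∀ a ⦃S T : Set ℕ⦄, T ⊆ S → Q a S → Q a T)
    (hstep : ∀ S : Set ℕ, S.Infinite → ∃ a ∈ S, ∃ T ⊆ S \ Set.Iic a, T.Infinite ∧ Q a T)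
    {S : Set ℕ} (hS : S.Infinite) :
    ∃ x : ℕ → ℕ, StrictMono x ∧ (∀ i, x i ∈ S) ∧ ∀ i, Q (x i) (x '' Set.Ioi i) := by
  choose a ha T hT hTinf hQT using hstep
  let U : ℕ → {S : Set ℕ // S.Infinite} := fun i =>
    Nat.rec ⟨S, hS⟩ (fun _ V => ⟨T V.1 V.2, hTinf V.1 V.2⟩) i
  let x : ℕ → ℕ := fun i => a (U i).1 (U i).2
  have hxU : ∀ i, x i ∈ (U i).1 := fun i => ha _ _
  have hUsucc : ∀ i, (U (i + 1)).1 ⊆ (U i).1 \ Set.Iic (x i) := fun i => hT _ _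
  have hU : Antitone fun i => (U i).1 :=
    antitone_nat_of_succ_le fun i => (hUsucc i).trans Set.sdiff_subset
  have hx : StrictMono x := strictMono_nat_of_lt_succ fun i =>
    not_le.1 (hUsucc i (hxU (i + 1))).2
  refine ⟨x, hx, fun i => hU (Nat.zero_le i) (hxU i), fun i => hQ _ ?_ (hQT _ _)⟩
  rintro _ ⟨j, hij, rfl⟩
  exact hU (Nat.succ_le_of_lt hij) (hxU j)

theorem exists_infinite_homogeneous {κ : Type*} [Finite κ] (n : ℕ) :
    ∀ (f : Finset ℕ → κ) {S : Set ℕ}, S.Infinite →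
      ∃ T ⊆ S, T.Infinite ∧ ∃ v, ∀ Y : Finset ℕ, ↑Y ⊆ T → #Y = n → f Y = v := by
  induction n with
  | zero => exact fun f S hS => ⟨S, subset_rfl, hS, f ∅, fun Y _ hY => by rw [card_eq_zero.1 hY]⟩
  | succ n ih =>
    intro f S hS
    obtain ⟨x, hx, hxS, hhom⟩ := exists_strictMono_of_forall_infinite
      (fun a T => ∃ v, ∀ Y : Finset ℕ, ↑Y ⊆ T → #Y = n → f (insert a Y) = v)
      (fun a S T hTS ⟨v, hv⟩ => ⟨v, fun Y hY => hv Y (hY.trans hTS)⟩)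
      (fun S hS =>
        have ⟨a, ha⟩ := hS.nonempty
        have ⟨T, hTS, hT, hv⟩ := ih (fun Y => f (insert a Y)) (hS.sdiff (Set.finite_Iic a))
        ⟨a, ha, T, hTS, hT, hv⟩)
      hS
    -- an `(n+1)`-subset of `range x` with minimum `x i` has colour `g i`; pigeonhole on `g`
    choose g hg using hhom
    obtain ⟨v, hv⟩ := Finite.exists_infinite_fiber g
    refine ⟨x '' (g ⁻¹' {v}), ?_, (Set.infinite_coe_iff.1 hv).image hx.injective.injOn, v, ?_⟩
    · rintro _ ⟨i, -, rfl⟩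
      exact hxS i
    intro Y hYT hY
    have hne : Y.Nonempty := card_pos.1 (by omega)
    obtain ⟨i, hgi, hi⟩ := hYT (Y.min'_mem hne)
    have htail : ↑(Y.erase (x i)) ⊆ x '' Set.Ioi i := by
      intro y hy
      obtain ⟨hyi, hyY⟩ := mem_erase.1 hy
      obtain ⟨j, -, rfl⟩ := hYT hyY
      have : x i < x j := hi ▸ lt_of_le_of_ne (Y.min'_le _ hyY) (hi ▸ hyi.symm)
      exact ⟨j, hx.lt_iff_lt.1 this, rfl⟩
    have hmem : x i ∈ Y := hi ▸ Y.min'_mem hne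
    calc f Y = f (insert (x i) (Y.erase (x i))) := by rw [insert_erase hmem]
      _ = v := (hg i _ htail (by rw [card_erase_of_mem hmem, hY]; rfl)).trans hgi

lemma diagHom_insert {n c : ℕ} {P : Finset ℕ → Fin c} {H : Finset ℕ} {b : ℕ}
    (hH : DiagHom n P H) (hbH : ∀ y ∈ H, b < y)
    (hb : ∀ a < b, ∀ Y Z : Finset ℕ, Y ⊆ H → Z ⊆ H → #Y = n → #Z = n →
      P (insert a Y) = P (insert a Z)) :
    DiagHom n P (insert b H) := by
  intro x₀ hx₀ a ha Y Z hY hZ hYc hZc hYgt hZgt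
  have hbx₀ : b ≤ x₀ := (mem_insert.1 hx₀).elim ge_of_eq fun h => (hbH x₀ h).le
  have above : ∀ W ⊆ insert b H, (∀ w ∈ W, x₀ < w) → W ⊆ H := fun W hW hWgt w hw =>
    (mem_insert.1 (hW hw)).resolve_left ((hWgt w hw).trans_le' hbx₀).ne'
  rcases mem_insert.1 hx₀ with rfl | hx₀H
  · exact hb a ha Y Z (above Y hY hYgt) (above Z hZ hZgt) hYc hZc
  · exact hH x₀ hx₀H a ha Y Z (above Y hY hYgt) (above Z hZ hZgt) hYc hZc hYgt hZgt

lemma exists_diagHom_subset (n : ℕ) {c : ℕ} (P : Finset ℕ → Fin c) (m : ℕ) :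
    ∀ {S : Set ℕ}, S.Infinite → ∃ H : Finset ℕ, ↑H ⊆ S ∧ #H = m ∧ DiagHom n P H := by
  induction m with
  | zero => exact fun _ => ⟨∅, by simp, rfl, by simp [DiagHom]⟩
  | succ m ih =>
    intro S hS
    obtain ⟨b, hb⟩ := hS.nonempty
    obtain ⟨T, hTS, hT, v, hv⟩ := exists_infinite_homogeneous n
      (fun Y (a : Fin b) => P (insert a.1 Y)) (hS.sdiff (Set.finite_Iic b))
    obtain ⟨H, hHT, hHcard, hH⟩ := ih hT
    have hbH : ∀ y ∈ H, b < y := fun y hy => not_le.1 (hTS (hHT hy)).2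
    refine ⟨insert b H, ?_, ?_, diagHom_insert hH hbH fun a ha Y Z hY hZ hYc hZc => ?_⟩
    · rw [coe_insert]
      exact Set.insert_subset hb fun y hy => (hTS (hHT hy)).1
    · rw [card_insert_of_notMem fun h => lt_irrefl b (hbH b h), hHcard]
    · have hY := congrFun (hv Y ((coe_subset.2 hY).trans hHT) hYc) ⟨a, ha⟩
      have hZ := congrFun (hv Z ((coe_subset.2 hZ).trans hHT) hZc) ⟨a, ha⟩
      exact hY.trans hZ.symm

lemma DiagHom.of_eqOn_range {n c K : ℕ} {P Q : Finset ℕ → Fin c} {H : Finset ℕ}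
    (hP : DiagHom n P H) (hHK : H ⊆ range K) (hPQ : ∀ s ⊆ range K, P s = Q s) :
    DiagHom n Q H := by
  intro x₀ hx₀ a ha Y Z hY hZ hYc hZc hYgt hZgt
  have hsub : ∀ W ⊆ H, insert a W ⊆ range K := fun W hW =>
    insert_subset (mem_range.2 (ha.trans (mem_range.1 (hHK hx₀)))) (hW.trans hHK)
  rw [← hPQ _ (hsub Y hY), ← hPQ _ (hsub Z hZ)]
  exact hP x₀ hx₀ a ha Y Z hY hZ hYc hZc hYgt hZgt

lemma ArrowDiag.mono {K K' m n c : ℕ} (hK : K ≤ K') (h : ArrowDiag K m n c) :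
    ArrowDiag K' m n c := fun P =>
  have ⟨H, hHK, hH⟩ := h P
  ⟨H, hHK.trans (range_subset_range.2 hK), hH⟩

lemma exists_subseq_eventually_eqOn {ι α : Type*} [Countable ι] [Finite α] (Q : ℕ → ι → α) :
    ∃ P : ι → α, ∃ φ : ℕ → ℕ, StrictMono φ ∧
      ∀ F : Finset ι, ∀ᶠ j in atTop, ∀ i ∈ F, Q (φ j) i = P i := by
  let _ : TopologicalSpace α := ⊥
  have : DiscreteTopology α := ⟨rfl⟩
  obtain ⟨P, φ, hφ, hlim⟩ := SeqCompactSpace.tendsto_subseq Q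
  refine ⟨P, φ, hφ, fun F => (eventually_all_finset F).2 fun i _ => ?_⟩
  have hi := tendsto_pi_nhds.1 hlim i
  rwa [nhds_discrete, tendsto_pure] at hi

theorem exists_arrowDiag (n m c : ℕ) : ∃ K, ArrowDiag K m n c := by
  by_contra! hbad
  simp only [ArrowDiag, not_forall, not_exists, not_and] at hbad
  choose Q hQ using hbad
  obtain ⟨P, φ, hφ, hlim⟩ := exists_subseq_eventually_eqOn Q
  obtain ⟨H, -, hHcard, hH⟩ := exists_diagHom_subset n P m Set.infinite_univ
  obtain ⟨K, hHK⟩ := exists_nat_subset_range H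
  obtain ⟨j, hagree, hjK⟩ :=
    ((hlim (range K).powerset).and (hφ.tendsto_atTop.eventually_ge_atTop K)).exists
  exact hQ (φ j) H (hHK.trans (range_subset_range.2 hjK)) hHcard
    (hH.of_eqOn_range hHK fun s hs => (hagree s (mem_powerset.2 hs)).symm)

/-- the Diagonal Homogeneous principle DH, a consequence of the
infinite Ramsey theorem: for all positive `n, m, c` there is `K > 1 + n` with
`K →_Δ (m)^{1+n}_c`. -/
theorem diagonal_homogeneous_principle :
    ∀ n m c : ℕ, 0 < n → 0 < m → 0 < c →
      ∃ K : ℕ, 1 + n < K ∧ ArrowDiag K m n c := by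
  intro n m c _ _ _
  obtain ⟨K, hK⟩ := exists_arrowDiag n m c
  exact ⟨max K (n + 2), by omega, hK.mono (le_max_left _ _)⟩
end

section
/- For every infinite set X ⊆ ℕ, every n ≥ 1, every c ≥ 1, and every coloring P : [ℕ]^{1+n} → c, there exists an infinite subset H ⊆ X that is diagonal homogeneous for P: for all x₀ ∈ H, all a < x₀, and all n-element subsets Y, Z of H whose minimum exceeds x₀, P({a} ∪ Y) = P({a} ∪ Z). -/
/-!
Both the infinite Ramsey theorem and the diagonal version follow from one fusion construction:
shrink an infinite set step by step, at step `i` fixing its least element `xᵢ` and passing to an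
infinite subset of the points above `xᵢ` on which a property depending on `xᵢ` holds. For the
diagonal statement the property is that, for every `a < xᵢ`, the color of `{a} ∪ Y` does not
depend on `Y`; Ramsey's theorem for `n`-sets, with colors `Fin xᵢ → Fin c`, provides it. The
points `xᵢ` form the homogeneous set.
-/

open Set

theorem StrictMono.range_inter_Ioi {x : ℕ → ℕ} (hx : StrictMono x) (i : ℕ) :
    range x ∩ Ioi (x i) = x '' Ioi i := by
  ext y
  constructor
  · rintro ⟨⟨j, rfl⟩, hj⟩
    exact ⟨j, hx.lt_iff_lt.mp hj, rfl⟩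
  · rintro ⟨j, hj, rfl⟩
    exact ⟨mem_range_self j, hx hj⟩

theorem exists_strictMono_forall_image_Ioi {Q : ℕ → Set ℕ → Prop} (hQ_anti : ∀ m, Antitone (Q m))
    (hQ : ∀ m T, T.Infinite → ∃ T' ⊆ T, T'.Infinite ∧ Q m T') {S : Set ℕ} (hS : S.Infinite) :
    ∃ x : ℕ → ℕ, StrictMono x ∧ (∀ i, x i ∈ S) ∧ ∀ i, Q (x i) (x '' Ioi i) := by
  have hstep : ∀ T : {T : Set ℕ // T.Infinite}, ∃ T' : {T : Set ℕ // T.Infinite},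
      T'.1 ⊆ T.1 \ Iic (sInf T.1) ∧ Q (sInf T.1) T'.1 := by
    rintro ⟨T, hT⟩
    obtain ⟨T', hT'_sub, hT'_inf, hQT'⟩ := hQ (sInf T) _ (hT.sdiff (finite_Iic (sInf T)))
    exact ⟨⟨T', hT'_inf⟩, hT'_sub, hQT'⟩
  choose step hstep_sub hstep_Q using hstep
  set F : ℕ → {T : Set ℕ // T.Infinite} := fun i => step^[i] ⟨S, hS⟩
  have hF_succ (i : ℕ) : F (i + 1) = step (F i) := Function.iterate_succ_apply' _ _ _
  have hF_anti : Antitone fun i => (F i).1 :=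
    antitone_nat_of_succ_le fun i => hF_succ i ▸ (hstep_sub (F i)).trans sdiff_subset
  set x : ℕ → ℕ := fun i => sInf (F i).1
  have hx_mem (i : ℕ) : x i ∈ (F i).1 := Nat.sInf_mem (F i).2.nonempty
  have hx_tail {i j : ℕ} (hij : i < j) : x j ∈ (step (F i)).1 :=
    hF_succ i ▸ hF_anti (Nat.succ_le_of_lt hij) (hx_mem j)
  have hx_mono : StrictMono x := strictMono_nat_of_lt_succ fun i => by
    simpa using (hstep_sub (F i) (hx_tail (Nat.lt_succ_self i))).2
  refine ⟨x, hx_mono, fun i => hF_anti (Nat.zero_le i) (hx_mem i), fun i => ?_⟩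
  refine hQ_anti (x i) ?_ (hstep_Q (F i))
  rintro _ ⟨j, hij, rfl⟩
  exact hx_tail hij

theorem Set.Infinite.exists_infinite_monochromatic (n : ℕ) {κ : Type*} [Finite κ]
    (f : Finset ℕ → κ) {S : Set ℕ} (hS : S.Infinite) :
    ∃ H ⊆ S, H.Infinite ∧ ∃ k, ∀ Y : Finset ℕ, ↑Y ⊆ H → Y.card = n → f Y = k := by
  induction n generalizing f S with
  | zero => exact ⟨S, subset_rfl, hS, f ∅, fun Y _ hY => by rw [Finset.card_eq_zero.mp hY]⟩
  | succ n ih =>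
    let Q (m : ℕ) (T : Set ℕ) : Prop :=
      ∃ k, ∀ Y : Finset ℕ, ↑Y ⊆ T → Y.card = n → f (insert m Y) = k
    obtain ⟨x, hx_mono, hx_mem, hxQ⟩ := exists_strictMono_forall_image_Ioi (Q := Q)
      (fun m _ _ hTT' ⟨k, hk⟩ => ⟨k, fun Y hY => hk Y (hY.trans hTT')⟩)
      (fun m T hT => ih (fun Y => f (insert m Y)) hT) hS
    choose col hcol using hxQ
    obtain ⟨k, hk⟩ := Finite.exists_infinite_fiber col
    have hI : (col ⁻¹' {k}).Infinite := infinite_coe_iff.mp hk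
    refine ⟨x '' (col ⁻¹' {k}), ?_, hI.image hx_mono.injective.injOn, k, fun Y hY hY_card => ?_⟩
    · rintro _ ⟨i, -, rfl⟩
      exact hx_mem i
    have hY_ne : Y.Nonempty := Finset.card_pos.mp (hY_card ▸ Nat.succ_pos n)
    obtain ⟨i, hi, hxi⟩ := hY (Y.min'_mem hY_ne)
    have hxiY : x i ∈ Y := hxi ▸ Y.min'_mem hY_ne
    have hrest : ↑(Y.erase (x i)) ⊆ x '' Ioi i := by
      rw [← hx_mono.range_inter_Ioi]
      intro y hy
      have hyY := Finset.mem_of_mem_erase hy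
      obtain ⟨j, -, rfl⟩ := hY hyY
      exact ⟨mem_range_self j,
        lt_of_le_of_ne (hxi ▸ Y.min'_le _ hyY) (Finset.ne_of_mem_erase hy).symm⟩
    have hrest_card : (Y.erase (x i)).card = n := by
      rw [Finset.card_erase_of_mem hxiY, hY_card, Nat.add_sub_cancel]
    rw [← Finset.insert_erase hxiY, hcol i _ hrest hrest_card]
    exact hi

theorem infinite_diagonal_homogeneous_general (X : Set ℕ) (hX : X.Infinite)
    (n c : ℕ) (P : Finset ℕ → Fin c) :
    ∃ H : Set ℕ, H ⊆ X ∧ H.Infinite ∧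
      ∀ x₀ ∈ H, ∀ a < x₀, ∀ Y Z : Finset ℕ, ↑Y ⊆ H → ↑Z ⊆ H →
        Y.card = n → Z.card = n → (∀ y ∈ Y, x₀ < y) → (∀ z ∈ Z, x₀ < z) →
        P (insert a Y) = P (insert a Z) := by
  let Q (m : ℕ) (T : Set ℕ) : Prop := ∀ a < m, ∀ Y Z : Finset ℕ, ↑Y ⊆ T → ↑Z ⊆ T →
    Y.card = n → Z.card = n → P (insert a Y) = P (insert a Z)
  have hQ (m : ℕ) (T : Set ℕ) (hT : T.Infinite) : ∃ T' ⊆ T, T'.Infinite ∧ Q m T' := by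
    obtain ⟨T', hT'_sub, hT'_inf, k, hk⟩ := hT.exists_infinite_monochromatic n
      (fun Y (a : Fin m) => P (insert (a : ℕ) Y))
    refine ⟨T', hT'_sub, hT'_inf, fun a ha Y Z hY hZ hY_card hZ_card => ?_⟩
    exact (congrFun (hk Y hY hY_card) ⟨a, ha⟩).trans (congrFun (hk Z hZ hZ_card) ⟨a, ha⟩).symm
  obtain ⟨x, hx_mono, hx_mem, hxQ⟩ := exists_strictMono_forall_image_Ioi (Q := Q)
    (fun m _ _ hTT' hQT a ha Y Z hY hZ => hQT a ha Y Z (hY.trans hTT') (hZ.trans hTT')) hQ hX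
  refine ⟨range x, range_subset_iff.mpr hx_mem, infinite_range_of_injective hx_mono.injective, ?_⟩
  rintro _ ⟨i, rfl⟩ a ha Y Z hY hZ hY_card hZ_card hY_gt hZ_gt
  have habove {W : Finset ℕ} (hW : ↑W ⊆ range x) (hW_gt : ∀ w ∈ W, x i < w) :
      ↑W ⊆ x '' Ioi i :=
    hx_mono.range_inter_Ioi i ▸ subset_inter hW hW_gt
  exact hxQ i a ha Y Z (habove hY hY_gt) (habove hZ hZ_gt) hY_card hZ_card

/-- infinitary diagonal homogeneity: for every infinite `X ⊆ ℕ`,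
`n, c ≥ 1` and coloring `P` of `(1+n)`-element sets by `c` colors, there is an
infinite `H ⊆ X` that is diagonal homogeneous for `P`. -/
theorem infinite_diagonal_homogeneous (X : Set ℕ) (hX : X.Infinite)
    (n c : ℕ) (hn : 1 ≤ n) (hc : 1 ≤ c) (P : Finset ℕ → Fin c) :
    ∃ H : Set ℕ, H ⊆ X ∧ H.Infinite ∧
      ∀ x₀ ∈ H, ∀ a < x₀, ∀ Y Z : Finset ℕ, ↑Y ⊆ H → ↑Z ⊆ H →
        Y.card = n → Z.card = n → (∀ y ∈ Y, x₀ < y) → (∀ z ∈ Z, x₀ < z) →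
        P (insert a Y) = P (insert a Z) :=
  infinite_diagonal_homogeneous_general X hX n c P
end

section
/- Weakening for the witness-bounding derivability relation: if (γ, k) ⊢^α_c Γ, and for all n, H_γ(max(k,n)) ≤ H_{γ₁}(max(k₁,n)), then for all Γ ⊆ Γ₁, all α₁ with α ≤_{H_{γ₁}(k₁)} α₁, and all c ≤ c₁, we have (γ₁, k₁) ⊢^{α₁}_{c₁} Γ₁. -/
/-- Infinitary sentences of arithmetic: `Δ₀`-sentences are identified with their
truth value, and quantifiers range over numerals. -/
inductive Fml : Type 1 where
  | delta0 (P : Prop) : Fml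
  | or (A B : Fml) : Fml
  | and (A B : Fml) : Fml
  | ex (A : ℕ → Fml) : Fml
  | all (A : ℕ → Fml) : Fml

/-- Negation (de Morgan dual). -/
def Fml.neg : Fml → Fml
  | .delta0 P => .delta0 (¬ P)
  | .or A B => .and A.neg B.neg
  | .and A B => .or A.neg B.neg
  | .ex A => .all fun n => (A n).neg
  | .all A => .ex fun n => (A n).neg

/-- `dg(A)`: `dg = 0` on `Δ₀`, `max` at `∨,∧`, `+1` at quantifiers. -/
def Fml.dg : Fml → ℕ
  | .delta0 _ => 0
  | .or A B => max A.dg B.dg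
  | .and A B => max A.dg B.dg
  | .ex A => (A 0).dg + 1
  | .all A => (A 0).dg + 1

/-- `A` is a `Σ₁`-sentence `∃x A₀(x)` with `A₀ ∈ Δ₀`. -/
def Fml.IsSigma1 (A : Fml) : Prop :=
  ∃ f : ℕ → Fml, A = Fml.ex f ∧ ∀ n, ∃ P : Prop, f n = Fml.delta0 P

/-- Truth of a `Δ₀`-sentence. -/
def Fml.TrueD0 (A : Fml) : Prop := ∃ P : Prop, A = Fml.delta0 P ∧ P

/-- `k ⊨ ∃x A(x)` : there is a witness `n < k` making the `Δ₀`-matrix true. -/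
def Fml.SatBelow (k : ℕ) (A : Fml) : Prop :=
  ∃ f : ℕ → Fml, A = Fml.ex f ∧ ∃ n < k, (f n).TrueD0

/-- The witness-bounding derivability relation `(γ, k) ⊢^α_c Γ`, with
`ℓ = H_γ(k)` controlling ordinal descent and existential witnesses. -/
inductive Der : ONote → ℕ → ONote → ℕ → Set Fml → Prop
  | ax {γ : ONote} {k : ℕ} {α : ONote} {c : ℕ} {Γ : Set Fml} (P : Prop) (hP : P)
      (hmem : Fml.delta0 P ∈ Γ) : Der γ k α c Γ
  | cut {γ : ONote} {k : ℕ} {α α₀ : ONote} {c : ℕ} {Γ : Set Fml} (A : Fml)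
      (hord : ONote.stepLe (hardy γ k) (α₀ + 1) α) (hdg : A.dg < c)
      (d₁ : Der γ k α₀ c (insert A Γ)) (d₂ : Der γ k α₀ c (insert A.neg Γ)) :
      Der γ k α c Γ
  | and {γ : ONote} {k : ℕ} {α α₀ : ONote} {c : ℕ} {Γ : Set Fml} (A₀ A₁ : Fml)
      (hord : ONote.stepLt (hardy γ k) α₀ α) (hmem : Fml.and A₀ A₁ ∈ Γ)
      (d₀ : Der γ k α₀ c (insert A₀ Γ)) (d₁ : Der γ k α₀ c (insert A₁ Γ)) :
      Der γ k α c Γ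
  | or {γ : ONote} {k : ℕ} {α α₀ : ONote} {c : ℕ} {Γ : Set Fml} (A₀ A₁ : Fml) (i : Bool)
      (hord : ONote.stepLe (hardy γ k) (α₀ + 1) α) (hmem : Fml.or A₀ A₁ ∈ Γ)
      (d : Der γ k α₀ c (insert (cond i A₀ A₁) Γ)) : Der γ k α c Γ
  | allOmega {γ : ONote} {k : ℕ} {α α₀ : ONote} {c : ℕ} {Γ : Set Fml} (A : ℕ → Fml)
      (hord : ONote.stepLt (hardy γ k) α₀ α) (hmem : Fml.all A ∈ Γ)
      (d : ∀ n : ℕ, Der γ (max k n) α₀ c (insert (A n) Γ)) : Der γ k α c Γ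
  | exIntro {γ : ONote} {k : ℕ} {α α₀ : ONote} {c : ℕ} {Γ : Set Fml} (A : ℕ → Fml) (n : ℕ)
      (hord : ONote.stepLe (hardy γ k) (α₀ + 1) α) (hmem : Fml.ex A ∈ Γ)
      (hn : n < hardy γ k) (d : Der γ k α₀ c (insert (A n) Γ)) : Der γ k α c Γ

/-!
Weakening is proved by induction on the derivation. Contexts, cut rank and witness bound
transfer directly: the hypothesis on `H` at `n = 0` gives `H_γ(k) ≤ H_{γ₁}(k₁)`, and it
survives the passage to `max k n` in the `ω`-rule because `max` is associative.
The ordinal side conditions need that `≤_ℓ` only grows with `ℓ`, i.e. that `β[n] ≤_m β[m]`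
whenever `n ≤ m`. This is proved by structural induction on `β`: a successor exponent reduces
it to `ω^e·i ≤_m ω^e·j` for `i ≤ j`, which rests on `0 ≤_m β` for every `β` (the descent
along `β[m]` terminates because `β[m] < β` as ordinals); a limit exponent lifts the induction
hypothesis through `e ↦ ω^e`.
-/

namespace ONote

open Ordinal

variable {n m : ℕ} {a b c : ONote}

/-- `ω^e·(k-1) + t`; coefficients live in `ℕ+`, hence the case split. -/
def oaddPred (e : ONote) (k : ℕ+) (t : ONote) : ONote :=
  if k = 1 then t else oadd e (k - 1) t

@[simp]
theorem oaddPred_one (e t : ONote) : oaddPred e 1 t = t := if_pos rfl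

theorem oaddPred_succ (e : ONote) (k : ℕ+) (t : ONote) : oaddPred e (k + 1) t = oadd e k t := by
  rw [oaddPred, if_neg (ne_of_gt (PNat.lt_add_left 1 k)), PNat.add_sub]

theorem fseq_oadd_oadd (e : ONote) (k : ℕ+) (e' : ONote) (k' : ℕ+) (a' : ONote) (x : ℕ) :
    (oadd e k (oadd e' k' a')).fseq x = oadd e k ((oadd e' k' a').fseq x) :=
  fseq.eq_2 ..

theorem fseq_oadd_zero_zero (k : ℕ+) (x : ℕ) : (oadd 0 k 0).fseq x = oaddPred 0 k 0 :=
  fseq.eq_3 ..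

theorem fseq_oadd_zero_of_isSucc {e : ONote} (he : e.isSucc) (k : ℕ+) :
    (oadd e k 0).fseq 0 = oaddPred e k 0 := by
  cases e with
  | zero => exact he.elim
  | oadd => exact (fseq.eq_4 ..).trans (if_pos he)

theorem fseq_oadd_succ_of_isSucc {e : ONote} (he : e.isSucc) (k : ℕ+) (y : ℕ) :
    (oadd e k 0).fseq (y + 1) = oaddPred e k (oadd (e.fseq (y + 1)) y.succPNat 0) := by
  cases e with
  | zero => exact he.elim
  | oadd => exact (fseq.eq_5 ..).trans (if_pos he)

theorem fseq_oadd_of_not_isSucc {e : ONote} (he₀ : e ≠ 0) (he : ¬ e.isSucc) (k : ℕ+)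
    (x : ℕ) : (oadd e k 0).fseq x = oaddPred e k (oadd (e.fseq x) 1 0) := by
  cases e with
  | zero => exact (he₀ rfl).elim
  | oadd =>
    cases x
    · exact (fseq.eq_4 ..).trans (if_neg he)
    · exact (fseq.eq_5 ..).trans (if_neg he)

theorem stepLe.refl (n : ℕ) (a : ONote) : stepLe n a a := .inr rfl

theorem stepLt.le (h : stepLt n a b) : stepLe n a b := .inl h

theorem stepLe.trans_stepLt (h₁ : stepLe n a b) (h₂ : stepLt n b c) : stepLt n a c := by
  rcases h₁ with h₁ | rfl
  exacts [h₁.trans h₂, h₂]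

theorem stepLt.trans_stepLe (h₁ : stepLt n a b) (h₂ : stepLe n b c) : stepLt n a c := by
  rcases h₂ with h₂ | rfl
  exacts [Relation.TransGen.trans h₁ h₂, h₁]

theorem stepLe.trans (h₁ : stepLe n a b) (h₂ : stepLe n b c) : stepLe n a c := by
  rcases h₂ with h₂ | rfl
  exacts [(h₁.trans_stepLt h₂).le, h₁]

theorem stepLt_fseq (n : ℕ) (b : ONote) : stepLt n (b.fseq n) b := .single rfl

theorem stepLt_of_stepLe_fseq (h : stepLe n a (b.fseq n)) : stepLt n a b :=
  h.trans_stepLt (stepLt_fseq n b)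

theorem stepLe.map {f : ONote → ONote} (hf : ∀ b, stepLe n (f (b.fseq n)) (f b))
    (h : stepLe n a b) : stepLe n (f a) (f b) := by
  rcases h with h | rfl
  · induction h with
    | single h => exact h ▸ hf _
    | tail _ h ih => exact ih.trans (h ▸ hf _)
  · exact .refl n _

theorem stepLe.oadd_tail (e : ONote) (k : ℕ+) (h : stepLe n a b) :
    stepLe n (oadd e k a) (oadd e k b) := by
  refine h.map fun t ↦ ?_
  cases t with
  | zero => exact .refl n _
  | oadd e' k' a' => exact .inl (.single (fseq_oadd_oadd ..).symm)

theorem stepLe.oaddPred (e : ONote) (k : ℕ+) (h : stepLe n a b) :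
    stepLe n (oaddPred e k a) (oaddPred e k b) := by
  unfold ONote.oaddPred
  split
  exacts [h, h.oadd_tail e _]

theorem oaddPred_lt {e t : ONote} (k : ℕ+) (h : t.repr < ω ^ e.repr) :
    oaddPred e k t < oadd e k 0 := by
  rcases eq_or_ne k 1 with rfl | hk
  · simpa [oaddPred, lt_def] using h
  obtain ⟨j, rfl⟩ := PNat.exists_eq_succ_of_ne_one hk
  rw [oaddPred_succ, lt_def]
  calc (oadd e j t).repr = ω ^ e.repr * (j : ℕ) + t.repr := rfl
    _ < ω ^ e.repr * (j : ℕ) + ω ^ e.repr := add_lt_add_right h _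
    _ = (oadd e (j + 1) 0).repr := by simp [repr, mul_add]

theorem exists_fseq_oadd_zero_eq_oaddPred (e : ONote) (k : ℕ+) (m : ℕ)
    (he : e ≠ 0 → e.fseq m < e) :
    ∃ t, t.repr < ω ^ e.repr ∧ (oadd e k 0).fseq m = oaddPred e k t := by
  by_cases he₀ : e = 0
  · subst he₀
    exact ⟨0, by simp, fseq_oadd_zero_zero k m⟩
  by_cases hs : e.isSucc
  · cases m with
    | zero => exact ⟨0, by simp [opow_pos], fseq_oadd_zero_of_isSucc hs k⟩
    | succ y =>
      exact ⟨_, by simpa [repr] using opow_mul_lt_opow (natCast_lt_omega0 (y + 1)) (he he₀),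
        fseq_oadd_succ_of_isSucc hs k y⟩
  · exact ⟨_, by simpa [repr] using opow_mul_lt_opow (natCast_lt_omega0 1) (he he₀),
      fseq_oadd_of_not_isSucc he₀ hs k m⟩

theorem fseq_lt (m : ℕ) {β : ONote} (hβ : β ≠ 0) : β.fseq m < β := by
  induction β with
  | zero => exact (hβ rfl).elim
  | oadd e k a ihe iha =>
    cases a with
    | zero =>
      obtain ⟨t, ht, heq⟩ := exists_fseq_oadd_zero_eq_oaddPred e k m ihe
      exact heq ▸ oaddPred_lt k ht
    | oadd e' k' a' =>
      rw [fseq_oadd_oadd, lt_def]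
      exact add_lt_add_right (lt_def.1 (iha (by simp))) _

theorem zero_stepLe (m : ℕ) (β : ONote) : stepLe m 0 β := by
  rcases eq_or_ne β 0 with rfl | hβ
  · exact .refl m 0
  · exact (stepLt_of_stepLe_fseq (zero_stepLe m (β.fseq m))).le
termination_by β
decreasing_by exact fseq_lt m hβ

theorem fseq_eq_of_isSucc {e : ONote} (he : e.isSucc) (x y : ℕ) : e.fseq x = e.fseq y := by
  induction e with
  | zero => exact he.elim
  | oadd e k a _ iha =>
    cases a with
    | zero =>
      obtain rfl : e = 0 := he
      exact (fseq_oadd_zero_zero k x).trans (fseq_oadd_zero_zero k y).symm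
    | oadd => rw [fseq_oadd_oadd, fseq_oadd_oadd, iha he]

theorem stepLt_oadd_succ (m : ℕ) (e : ONote) (k : ℕ+) :
    stepLt m (oadd e k 0) (oadd e (k + 1) 0) := by
  obtain ⟨t, -, heq⟩ := exists_fseq_oadd_zero_eq_oaddPred e (k + 1) m (fseq_lt m)
  rw [oaddPred_succ] at heq
  exact stepLt_of_stepLe_fseq (heq ▸ (zero_stepLe m t).oadd_tail e k)

theorem stepLe_oadd_of_le (m : ℕ) (e : ONote) {i j : ℕ+} (hij : i ≤ j) :
    stepLe m (oadd e i 0) (oadd e j 0) := by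
  induction j using PNat.recOn with
  | one =>
    obtain rfl : i = 1 := le_antisymm hij one_le
    exact .refl m _
  | succ j ih =>
    rcases hij.eq_or_lt with rfl | h
    · exact .refl m _
    · exact (ih (PNat.lt_add_one_iff.1 h)).trans (stepLt_oadd_succ m e j).le

theorem stepLe.omega_pow (hm : 1 ≤ m) (h : stepLe m a b) :
    stepLe m (oadd a 1 0) (oadd b 1 0) := by
  refine h.map (f := (oadd · 1 0)) fun b ↦ ?_
  by_cases hb₀ : b = 0
  · subst hb₀
    exact .refl m _
  by_cases hs : b.isSucc
  · obtain ⟨y, rfl⟩ : ∃ y, m = y + 1 := ⟨m - 1, by omega⟩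
    have h := stepLt_fseq (y + 1) (oadd b 1 0)
    rw [fseq_oadd_succ_of_isSucc hs, oaddPred_one] at h
    exact (stepLe_oadd_of_le _ _ one_le).trans h.le
  · have h := stepLt_fseq m (oadd b 1 0)
    rw [fseq_oadd_of_not_isSucc hb₀ hs, oaddPred_one] at h
    exact h.le

theorem fseq_oadd_zero_stepLe_fseq (e : ONote) (k : ℕ+)
    (he : ∀ {n m : ℕ}, n ≤ m → stepLe m (e.fseq n) (e.fseq m)) (hnm : n ≤ m) :
    stepLe m ((oadd e k 0).fseq n) ((oadd e k 0).fseq m) := by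
  rcases hnm.eq_or_lt with rfl | hlt
  · exact .refl n _
  obtain ⟨y, rfl⟩ : ∃ y, m = y + 1 := ⟨m - 1, by omega⟩
  by_cases he₀ : e = 0
  · subst he₀
    rw [fseq_oadd_zero_zero, fseq_oadd_zero_zero]
    exact .refl _ _
  by_cases hs : e.isSucc
  · rw [fseq_oadd_succ_of_isSucc hs]
    cases n with
    | zero =>
      rw [fseq_oadd_zero_of_isSucc hs]
      exact (zero_stepLe _ _).oaddPred e k
    | succ z =>
      rw [fseq_oadd_succ_of_isSucc hs, fseq_eq_of_isSucc hs (z + 1) (y + 1)]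
      exact (stepLe_oadd_of_le _ _ (by simpa using hnm)).oaddPred e k
  · rw [fseq_oadd_of_not_isSucc he₀ hs, fseq_oadd_of_not_isSucc he₀ hs]
    exact ((he hnm).omega_pow (by omega)).oaddPred e k

theorem fseq_stepLe_fseq (b : ONote) (hnm : n ≤ m) : stepLe m (b.fseq n) (b.fseq m) := by
  induction b generalizing n m with
  | zero => exact .refl m _
  | oadd e k a ihe iha =>
    cases a with
    | zero => exact fseq_oadd_zero_stepLe_fseq e k ihe hnm
    | oadd =>
      rw [fseq_oadd_oadd, fseq_oadd_oadd]
      exact (iha hnm).oadd_tail e k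

theorem stepLt.mono_param (hnm : n ≤ m) (h : stepLt n a b) : stepLt m a b := by
  induction h with
  | single h => exact stepLt_of_stepLe_fseq (h ▸ fseq_stepLe_fseq _ hnm)
  | tail _ h ih => exact ih.trans_stepLe (stepLt_of_stepLe_fseq (h ▸ fseq_stepLe_fseq _ hnm)).le

theorem stepLe.mono_param (hnm : n ≤ m) (h : stepLe n a b) : stepLe m a b :=
  h.imp_left (·.mono_param hnm)

end ONote

theorem Der.weakening_general (γ γ₁ α α₁ : ONote) (k k₁ c c₁ : ℕ) (Γ Γ₁ : Set Fml)
    (d : Der γ k α c Γ)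
    (hH : ∀ n : ℕ, hardy γ (max k n) ≤ hardy γ₁ (max k₁ n))
    (hΓ : Γ ⊆ Γ₁) (hord : ONote.stepLe (hardy γ₁ k₁) α α₁) (hc : c ≤ c₁) :
    Der γ₁ k₁ α₁ c₁ Γ₁ := by
  induction d generalizing k₁ α₁ Γ₁ with
  | ax P hP hmem => exact .ax P hP (hΓ hmem)
  | cut A hord₀ hdg _ _ ih₁ ih₂ =>
    have hℓ := by simpa using hH 0
    exact .cut A ((hord₀.mono_param hℓ).trans hord) (hdg.trans_le hc)
      (ih₁ _ _ _ hH (Set.insert_subset_insert hΓ) (.refl _ _) hc)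
      (ih₂ _ _ _ hH (Set.insert_subset_insert hΓ) (.refl _ _) hc)
  | and A₀ A₁ hord₀ hmem _ _ ih₀ ih₁ =>
    have hℓ := by simpa using hH 0
    exact .and A₀ A₁ ((hord₀.mono_param hℓ).trans_stepLe hord) (hΓ hmem)
      (ih₀ _ _ _ hH (Set.insert_subset_insert hΓ) (.refl _ _) hc)
      (ih₁ _ _ _ hH (Set.insert_subset_insert hΓ) (.refl _ _) hc)
  | or A₀ A₁ i hord₀ hmem _ ih =>
    have hℓ := by simpa using hH 0
    exact .or A₀ A₁ i ((hord₀.mono_param hℓ).trans hord) (hΓ hmem)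
      (ih _ _ _ hH (Set.insert_subset_insert hΓ) (.refl _ _) hc)
  | allOmega A hord₀ hmem _ ih =>
    have hℓ := by simpa using hH 0
    refine .allOmega A ((hord₀.mono_param hℓ).trans_stepLe hord) (hΓ hmem) fun n ↦
      ih n _ (max k₁ n) _ (fun j ↦ ?_) (Set.insert_subset_insert hΓ) (.refl _ _) hc
    simpa only [max_assoc] using hH (max n j)
  | exIntro A n hord₀ hmem hn _ ih =>
    have hℓ := by simpa using hH 0
    exact .exIntro A n ((hord₀.mono_param hℓ).trans hord) (hΓ hmem) (hn.trans_le hℓ)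
      (ih _ _ _ hH (Set.insert_subset_insert hΓ) (.refl _ _) hc)

/-- Weakening: if `(γ,k) ⊢^α_c Γ` and
`H_γ(max(k,n)) ≤ H_{γ₁}(max(k₁,n))` for all `n`, then for `Γ ⊆ Γ₁`,
`α ≤_{H_{γ₁}(k₁)} α₁` and `c ≤ c₁` we get `(γ₁,k₁) ⊢^{α₁}_{c₁} Γ₁`. -/
theorem Der.weakening (γ γ₁ α α₁ : ONote) (k k₁ c c₁ : ℕ) (Γ Γ₁ : Set Fml)
    (hγ : γ.NF) (hγ₁ : γ₁.NF) (hα : α.NF) (hα₁ : α₁.NF)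
    (d : Der γ k α c Γ)
    (hH : ∀ n : ℕ, hardy γ (max k n) ≤ hardy γ₁ (max k₁ n))
    (hΓ : Γ ⊆ Γ₁) (hord : ONote.stepLe (hardy γ₁ k₁) α α₁) (hc : c ≤ c₁) :
    Der γ₁ k₁ α₁ c₁ Γ₁ :=
  Der.weakening_general γ γ₁ α α₁ k k₁ c c₁ Γ Γ₁ d hH hΓ hord hc
end

section
/- Bounding lemma: if Γ is a finite set of Σ₁-sentences and (γ, k) ⊢^α_0 Γ, then H_γ(k) ⊨ Γ, i.e., there exists a sentence ∃x A(x) in Γ (A ∈ Δ₀) such that ℕ ⊨ ∃x < H_γ(k) A(x). -/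
namespace Fml

def IsDelta0 (A : Fml) : Prop := ∃ P : Prop, A = .delta0 P

def IsSigma1OrDelta0 (A : Fml) : Prop := A.IsSigma1 ∨ A.IsDelta0

/-- `ℓ ⊨ A`, extended to `Δ₀`-sentences, whose truth does not depend on `ℓ`. -/
def BoundedTrue (ℓ : ℕ) (A : Fml) : Prop := A.SatBelow ℓ ∨ A.TrueD0

theorem isSigma1OrDelta0_ex_iff {f : ℕ → Fml} :
    (Fml.ex f).IsSigma1OrDelta0 ↔ ∀ n, (f n).IsDelta0 := by
  simp [IsSigma1OrDelta0, IsSigma1, IsDelta0]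

theorem IsSigma1.boundedTrue_iff {A : Fml} (hA : A.IsSigma1) {ℓ : ℕ} :
    A.BoundedTrue ℓ ↔ A.SatBelow ℓ := by
  obtain ⟨f, rfl, -⟩ := hA
  simp [BoundedTrue, TrueD0]

theorem IsDelta0.boundedTrue_iff {A : Fml} (hA : A.IsDelta0) {ℓ : ℕ} :
    A.BoundedTrue ℓ ↔ A.TrueD0 := by
  obtain ⟨P, rfl⟩ := hA
  simp [BoundedTrue, SatBelow]

theorem boundedTrue_ex_of_trueD0 {f : ℕ → Fml} {n ℓ : ℕ} (hn : n < ℓ) (h : (f n).TrueD0) :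
    (Fml.ex f).BoundedTrue ℓ :=
  .inl ⟨f, rfl, n, hn, h⟩

end Fml

/-- Without cuts, a derivation of a sequent of `Σ₁`- and `Δ₀`-sentences consists of axioms and
`∃`-introductions only, and the latter have witnesses below `H_γ(k)`. -/
theorem Der.exists_boundedTrue {γ α : ONote} {k : ℕ} {Γ : Set Fml} (d : Der γ k α 0 Γ)
    (hΓ : ∀ A ∈ Γ, A.IsSigma1OrDelta0) : ∃ A ∈ Γ, A.BoundedTrue (hardy γ k) := by
  generalize hc : 0 = c at d
  induction d with
  | ax P hP hmem => exact ⟨_, hmem, .inr ⟨P, rfl, hP⟩⟩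
  | cut _ _ hdg => omega
  | and _ _ _ hmem | or _ _ _ _ hmem | allOmega _ _ hmem =>
    have := hΓ _ hmem
    simp [Fml.IsSigma1OrDelta0, Fml.IsSigma1, Fml.IsDelta0] at this
  | @exIntro _ _ _ _ Γ A n _ hmem hn _ ih =>
    have hAn : (A n).IsDelta0 := Fml.isSigma1OrDelta0_ex_iff.mp (hΓ _ hmem) n
    obtain ⟨B, rfl | hB, htrue⟩ := ih (Set.forall_mem_insert.mpr ⟨.inr hAn, hΓ⟩) hc
    · exact ⟨_, hmem, Fml.boundedTrue_ex_of_trueD0 hn (hAn.boundedTrue_iff.mp htrue)⟩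
    · exact ⟨B, hB, htrue⟩

theorem Der.bounding_general (γ α : ONote) (k : ℕ) (Γ : Set Fml)
    (hSig : ∀ A ∈ Γ, A.IsSigma1)
    (d : Der γ k α 0 Γ) : ∃ A ∈ Γ, Fml.SatBelow (hardy γ k) A := by
  obtain ⟨A, hA, htrue⟩ := d.exists_boundedTrue fun A hA => .inl (hSig A hA)
  exact ⟨A, hA, (hSig A hA).boundedTrue_iff.mp htrue⟩

/-- Bounding: if `Γ` is a finite set of `Σ₁`-sentences and
`(γ,k) ⊢^α_0 Γ`, then `H_γ(k) ⊨ Γ`, i.e. some `∃x A(x) ∈ Γ` has a true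
instance with witness below `H_γ(k)`. -/
theorem Der.bounding (γ α : ONote) (k : ℕ) (Γ : Set Fml)
    (hγ : γ.NF) (hα : α.NF) (hfin : Γ.Finite) (hSig : ∀ A ∈ Γ, A.IsSigma1)
    (d : Der γ k α 0 Γ) : ∃ A ∈ Γ, Fml.SatBelow (hardy γ k) A :=
  Der.bounding_general γ α k Γ hSig d
end

section
/- Elimination of false Δ₀ sentences: if ⊥ is a false Δ₀-sentence and (γ, k) ⊢^α_c Γ, ⊥, then (γ, k) ⊢^α_c Γ. -/
theorem Der.false_elim_general (γ α : ONote) (k c : ℕ) (Γ : Set Fml) (P : Prop)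
    (hP : ¬ P) (d : Der γ k α c (insert (Fml.delta0 P) Γ)) : Der γ k α c Γ := by
  generalize hΔ : insert (Fml.delta0 P) Γ = Δ at d
  induction d generalizing Γ with subst hΔ
  | ax Q hQ hmem =>
    refine .ax Q hQ (Set.mem_of_mem_insert_of_ne hmem ?_)
    rintro ⟨⟩
    exact hP hQ
  | cut A hord hdg _ _ ih₁ ih₂ =>
    exact .cut A hord hdg (ih₁ _ (Set.insert_comm ..)) (ih₂ _ (Set.insert_comm ..))
  | and A₀ A₁ hord hmem _ _ ih₀ ih₁ =>
    exact .and A₀ A₁ hord (Set.mem_of_mem_insert_of_ne hmem Fml.noConfusion)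
      (ih₀ _ (Set.insert_comm ..)) (ih₁ _ (Set.insert_comm ..))
  | or A₀ A₁ i hord hmem _ ih =>
    exact .or A₀ A₁ i hord (Set.mem_of_mem_insert_of_ne hmem Fml.noConfusion)
      (ih _ (Set.insert_comm ..))
  | allOmega A hord hmem _ ih =>
    exact .allOmega A hord (Set.mem_of_mem_insert_of_ne hmem Fml.noConfusion)
      fun n => ih n _ (Set.insert_comm ..)
  | exIntro A n hord hmem hn _ ih =>
    exact .exIntro A n hord (Set.mem_of_mem_insert_of_ne hmem Fml.noConfusion) hn
      (ih _ (Set.insert_comm ..))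

/-- False: if `⊥` is a false `Δ₀`-sentence and
`(γ,k) ⊢^α_c Γ, ⊥`, then `(γ,k) ⊢^α_c Γ`. -/
theorem Der.false_elim (γ α : ONote) (k c : ℕ) (Γ : Set Fml) (P : Prop)
    (hγ : γ.NF) (hα : α.NF) (hP : ¬ P)
    (d : Der γ k α c (insert (Fml.delta0 P) Γ)) : Der γ k α c Γ :=
  Der.false_elim_general γ α k c Γ P hP d
end
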